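/- arXiv:1111.5739 — 4 statements merged into one kernel-verified Lean document; each statement's English description precedes it below -/
import Mathlib

section
/- Let A be an N×N real matrix with A_{ij} ≥ 0 for i ≠ j and all column sums zero, and let e_j be a standard basis vector of ℝ^N. Then the matrix Ψ(A, e_j) := diag(A e_j) − A diag(e_j) − diag(e_j) Aᵀ is symmetric and positive semidefinite. -/
open Matrix

/-- Ψ(A, x) = diag(Ax) − A diag(x) − diag(x) Aᵀ. -/
def Psi {N : ℕ} (A : Matrix (Fin N) (Fin N) ℝ) (x : Fin N → ℝ) :
    Matrix (Fin N) (Fin N) ℝ :=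
  Matrix.diagonal (A *ᵥ x) - A * Matrix.diagonal x - Matrix.diagonal x * Aᵀ

lemma Psi_apply {N : ℕ} (A : Matrix (Fin N) (Fin N) ℝ) (j : Fin N) (i k : Fin N) :
    Psi A (Pi.single j 1) i k =
      (if i = k then A i j else 0) - (if k = j then A i k else 0)
        - (if i = j then A k i else 0) := by
  simp [Psi, Matrix.sub_apply, Matrix.mul_diagonal, Matrix.diagonal_mul,
    Matrix.diagonal_apply, Matrix.mulVec_single, Pi.single_apply, Matrix.transpose_apply]

theorem stmt_1 {N : ℕ} (A : Matrix (Fin N) (Fin N) ℝ)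
    (hoff : ∀ i j, i ≠ j → 0 ≤ A i j) (hcol : ∀ j, ∑ i, A i j = 0) (j : Fin N) :
    (Psi A (Pi.single j 1)).IsSymm ∧
    (∀ z : Fin N → ℝ, 0 ≤ z ⬝ᵥ (Psi A (Pi.single j 1) *ᵥ z)) := by
  constructor
  · ext i k
    simp only [Matrix.transpose_apply, Psi_apply]
    by_cases h : i = k
    · subst h; ring
    · rw [if_neg h, if_neg (Ne.symm h)]; ring
  · intro z
    set M := Psi A (Pi.single j 1) with hM
    have hrow : ∀ i, (∑ k, M i k * z k) =
        A i j * z i - A i j * z j - (if i = j then ∑ k, A k i * z k else 0) := by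
      intro i
      simp only [hM, Psi_apply, sub_mul, ite_mul, zero_mul, Finset.sum_sub_distrib]
      congr 1
      · congr 1
        · simp
        · simp
      · split_ifs <;> simp
    have key : z ⬝ᵥ (M *ᵥ z) = ∑ i, A i j * (z i - z j) ^ 2 := by
      calc z ⬝ᵥ (M *ᵥ z) = ∑ i, z i * (∑ k, M i k * z k) := by
            simp [dotProduct, mulVec]
        _ = ∑ i, z i * (A i j * z i - A i j * z j - (if i = j then ∑ k, A k i * z k else 0)) :=
            Finset.sum_congr rfl fun i _ => by rw [hrow i]
        _ = (∑ i, z i * (A i j * z i - A i j * z j))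
              - ∑ i, z i * (if i = j then ∑ k, A k i * z k else 0) := by
            simp only [mul_sub, Finset.sum_sub_distrib]
        _ = (∑ i, z i * (A i j * z i - A i j * z j)) - z j * ∑ k, A k j * z k := by
            congr 1
            simp only [mul_ite, mul_zero]
            rw [Finset.sum_ite_eq' Finset.univ j (fun i => z i * (∑ k, A k i * z k))]
            simp
        _ = ∑ i, (z i * (A i j * z i - A i j * z j) - A i j * z j * z i) := by
            rw [Finset.mul_sum, ← Finset.sum_sub_distrib]
            exact Finset.sum_congr rfl fun i _ => by ring
        _ = ∑ i, (A i j * (z i - z j) ^ 2 - A i j * z j ^ 2) :=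
            Finset.sum_congr rfl fun i _ => by ring
        _ = ∑ i, A i j * (z i - z j) ^ 2 := by
            rw [Finset.sum_sub_distrib, ← Finset.sum_mul, hcol j, zero_mul, sub_zero]
    rw [key]
    apply Finset.sum_nonneg
    intro i _
    by_cases h : i = j
    · simp [h]
    · exact mul_nonneg (hoff i j h) (sq_nonneg _)
end

section
/- Let A be an N×N rate matrix and e_j a standard basis vector. For z, z' ∈ ℝ^N, (z − z')ᵀ Ψ(A, e_j)(z − z') = 0 if and only if z_i − z_j = z'_i − z'_j for all i with A_{ij} > 0. -/
open Matrix

theorem stmt_4 {N : ℕ} (A : Matrix (Fin N) (Fin N) ℝ)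
    (hoff : ∀ i j, i ≠ j → 0 ≤ A i j) (hcol : ∀ j, ∑ i, A i j = 0) (j : Fin N)
    (z z' : Fin N → ℝ) :
    (z - z') ⬝ᵥ (Psi A (Pi.single j 1) *ᵥ (z - z')) = 0 ↔
      ∀ i, 0 < A i j → z i - z j = z' i - z' j := by
  set w : Fin N → ℝ := z - z' with hw
  have hentry : ∀ i k, Psi A (Pi.single j 1) i k =
      (if k = i then A i j else 0) - (if k = j then A i j else 0)
        - (if i = j then A k j else 0) := by
    intro i k
    simp only [Psi, Matrix.sub_apply, Matrix.mul_apply, Matrix.diagonal_apply,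
      Matrix.mulVec, dotProduct, Pi.single_apply, transpose_apply,
      mul_ite, ite_mul, mul_one, mul_zero, one_mul, zero_mul,
      Finset.sum_ite_eq, Finset.sum_ite_eq', Finset.mem_univ, if_true]
    by_cases hki : k = i <;> by_cases hkj : k = j <;> by_cases hij : i = j <;>
      simp_all
    all_goals (intro h; subst h; simp_all)
  have hrow : ∀ i, (Psi A (Pi.single j 1) *ᵥ w) i =
      A i j * w i - A i j * w j - (if i = j then ∑ k, A k j * w k else 0) := by
    intro i
    have h0 : (Psi A (Pi.single j 1) *ᵥ w) i =
        ∑ k, ((if k = i then A i j else 0) - (if k = j then A i j else 0)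
          - (if i = j then A k j else 0)) * w k := by
      simp only [Matrix.mulVec, dotProduct, hentry]
    rw [h0]
    have e : ∀ k ∈ (Finset.univ : Finset (Fin N)),
        ((if k = i then A i j else 0) - (if k = j then A i j else 0)
          - (if i = j then A k j else 0)) * w k
        = ((if k = i then A i j * w k else 0) - (if k = j then A i j * w k else 0))
          - (if i = j then A k j * w k else 0) := by
      intro k _; split_ifs <;> ring
    rw [Finset.sum_congr rfl e, Finset.sum_sub_distrib, Finset.sum_sub_distrib,
      Finset.sum_ite_eq' Finset.univ i (fun k => A i j * w k),
      Finset.sum_ite_eq' Finset.univ j (fun k => A i j * w k)]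
    by_cases hij : i = j <;> simp [hij]
  have key : w ⬝ᵥ (Psi A (Pi.single j 1) *ᵥ w) = ∑ i, A i j * (w i - w j) ^ 2 := by
    simp only [dotProduct, hrow]
    have e1 : ∀ i ∈ (Finset.univ : Finset (Fin N)), w i *
        (A i j * w i - A i j * w j - if i = j then ∑ k, A k j * w k else 0)
        = (A i j * w i ^ 2 - A i j * w i * w j)
          - (if i = j then w j * ∑ k, A k j * w k else 0) := by
      intro i _
      by_cases h : i = j
      · subst h; simp only [if_true]; ring
      · simp only [h, if_false]; ring
    have e2 : ∀ i ∈ (Finset.univ : Finset (Fin N)), A i j * (w i - w j) ^ 2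
        = (A i j * w i ^ 2 - A i j * w i * w j)
          - (A i j * w i * w j - A i j * w j ^ 2) := by
      intro i _; ring
    rw [Finset.sum_congr rfl e1, Finset.sum_congr rfl e2, Finset.sum_sub_distrib,
      Finset.sum_ite_eq' Finset.univ j (fun _ => w j * ∑ k, A k j * w k)]
    simp only [Finset.mem_univ, if_true]
    have h4 : ∑ x, ((A x j * w x ^ 2 - A x j * w x * w j)
          - (A x j * w x * w j - A x j * w j ^ 2))
        = ∑ x, (A x j * w x ^ 2 - A x j * w x * w j)
          - ∑ x, (A x j * w x * w j - A x j * w j ^ 2) := Finset.sum_sub_distrib _ _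
    rw [h4]
    have h2 : ∑ i, (A i j * w i * w j - A i j * w j ^ 2)
        = w j * ∑ k, A k j * w k := by
      rw [Finset.sum_sub_distrib, Finset.mul_sum]
      have h5 : ∑ i, A i j * w j ^ 2 = (∑ i, A i j) * w j ^ 2 := by
        rw [Finset.sum_mul]
      rw [h5, hcol, zero_mul, sub_zero]
      exact Finset.sum_congr rfl fun i _ => by ring
    rw [h2]
  rw [key]
  have hnn : ∀ i ∈ (Finset.univ : Finset (Fin N)), 0 ≤ A i j * (w i - w j) ^ 2 := by
    intro i _
    by_cases h : i = j
    · subst h; simp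
    · exact mul_nonneg (hoff i j h) (sq_nonneg _)
  rw [Finset.sum_eq_zero_iff_of_nonneg hnn]
  constructor
  · intro h i hA
    have hi := h i (Finset.mem_univ i)
    have hne : A i j ≠ 0 := ne_of_gt hA
    have hsq : (w i - w j) ^ 2 = 0 := by
      rcases mul_eq_zero.mp hi with h' | h'
      · exact absurd h' hne
      · exact h'
    have hwij : w i = w j := by nlinarith [sq_nonneg (w i - w j)]
    have hww : z i - z' i = z j - z' j := by simpa [hw, Pi.sub_apply] using hwij
    linarith
  · intro h i _
    by_cases hij : i = j
    · subst hij; simp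
    · rcases lt_or_eq_of_le (hoff i j hij) with hA | hA
      · have hh := h i hA
        have hwij : w i = w j := by
          simp only [hw, Pi.sub_apply]; linarith
        simp [hwij]
      · simp [← hA]
end

section
/- Let A be an N×N rate matrix and suppose f : [0,T] × ℝ^N → ℝ^N satisfies: f is Lipschitz in its second argument, and for each i, the i-th component e_iᵀ f(t, z) depends on z only through z_i and the differences z_k − z_i for k with A_{ki} > 0, with monotonicity: if z ≤ z' componentwise and z_i = z'_i then e_iᵀ f(t,z) ≤ e_iᵀ f(t,z'). If u, v : [0,T] → ℝ^N solve u' = −(f(t,u) + Aᵀu), v' = −(f(t,v) + Aᵀv) with terminal conditions u(T) = φ ≤ ψ = v(T) componentwise, then u(t) ≤ v(t) componentwise for all t ∈ [0,T]. -/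
/-!
Put `W k s = v s k - u s k + ε e^{(K+1)(T-s)}`, which is positive at `s = T`. Going backward
in time, at the last instant where some component `W i` vanishes we have `u ≤ v + c` with
equality in the `i`-th coordinate, `c = ε e^{(K+1)(T-s)}`. Quasimonotonicity of `f` and of
`z ↦ Aᵀz` (off-diagonal entries of `A` are nonnegative), invariance of `Aᵀz` under adding
constants (zero column sums) and the Lipschitz bound give `(W i)' ≤ K c - (K+1) c < 0` there,
which is impossible since `W i > 0` just afterwards. Letting `ε → 0` gives `u ≤ v`.
-/

open Matrix Set Filter Topology

def Quasimonotone {ι : Type*} (F : (ι → ℝ) → ι → ℝ) : Prop :=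
  ∀ i (z z' : ι → ℝ), z ≤ z' → z i = z' i → F z i ≤ F z' i

theorem Quasimonotone.add {ι : Type*} {F G : (ι → ℝ) → ι → ℝ} (hF : Quasimonotone F)
    (hG : Quasimonotone G) : Quasimonotone (F + G) :=
  fun i z z' hle heq => add_le_add (hF i z z' hle heq) (hG i z z' hle heq)

theorem quasimonotone_transpose_mulVec {ι : Type*} [Fintype ι] {A : Matrix ι ι ℝ}
    (hoff : ∀ i j, i ≠ j → 0 ≤ A i j) : Quasimonotone (Aᵀ *ᵥ ·) := by
  intro i z z' hle heq
  simp only [mulVec, dotProduct, transpose_apply]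
  refine Finset.sum_le_sum fun k _ => ?_
  rcases eq_or_ne k i with rfl | hki
  · rw [heq]
  · exact mul_le_mul_of_nonneg_left (hle k) (hoff k i hki)

theorem transpose_mulVec_add_const {ι : Type*} [Fintype ι] {A : Matrix ι ι ℝ}
    (hcol : ∀ j, ∑ i, A i j = 0) (z : ι → ℝ) (c : ℝ) :
    Aᵀ *ᵥ (z + fun _ => c) = Aᵀ *ᵥ z := by
  have hconst : Aᵀ *ᵥ (fun _ => c) = 0 := by
    ext j
    simp [mulVec, dotProduct, ← Finset.sum_mul, hcol]
  rw [mulVec_add, hconst, add_zero]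

theorem LipschitzWith.apply_add_const_le {ι : Type*} [Fintype ι] {F : (ι → ℝ) → ι → ℝ}
    {K : NNReal} (hF : LipschitzWith K F) (z : ι → ℝ) {c : ℝ} (hc : 0 ≤ c) (i : ι) :
    F (z + fun _ => c) i ≤ F z i + K * c := by
  have hdist : dist (F (z + fun _ => c)) (F z) ≤ K * c := calc
    _ ≤ K * dist (z + fun _ => c) z := hF.dist_le_mul _ _
    _ ≤ K * c := by
      rw [dist_self_add_left]
      gcongr
      simpa [Real.norm_eq_abs, abs_of_nonneg hc] using pi_norm_const_le (ι := ι) c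
  have hi := (le_abs_self _).trans ((dist_le_pi_dist _ _ i).trans hdist)
  linarith

theorem deriv_nonneg_of_eq_zero_of_pos_right {W : ℝ → ℝ} {W' x y : ℝ}
    (hW : HasDerivWithinAt W W' (Ici x) x) (hx : W x = 0) (hxy : x < y)
    (hpos : ∀ s ∈ Ioo x y, 0 < W s) : 0 ≤ W' := by
  by_contra! hneg
  obtain ⟨s, hslope, hs⟩ :=
    ((hW.liminf_right_slope_le hneg).and_eventually (Ioo_mem_nhdsGT hxy)).exists
  rw [slope_def_field, hx, sub_zero] at hslope
  exact hslope.not_ge (div_pos (hpos s hs) (sub_pos.2 hs.1)).le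

theorem pos_on_Icc_of_deriv_neg_at_boundary {ι : Type*} [Finite ι] {a b : ℝ}
    {W W' : ι → ℝ → ℝ} (hW : ∀ i, ∀ s ∈ Icc a b, HasDerivAt (W i) (W' i s) s)
    (hb : ∀ i, 0 < W i b)
    (hW' : ∀ s ∈ Ico a b, ∀ i, (∀ k, 0 ≤ W k s) → W i s = 0 → W' i s < 0) :
    ∀ s ∈ Icc a b, ∀ i, 0 < W i s := by
  by_contra! hex
  obtain ⟨s₁, hs₁, i₁, hi₁⟩ := hex
  set S : Set ℝ := ⋃ i, Icc a b ∩ W i ⁻¹' Iic 0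
  have hS : IsClosed S := isClosed_iUnion_of_finite fun i =>
    ContinuousOn.preimage_isClosed_of_isClosed
      (fun s hs => (hW i s hs).continuousAt.continuousWithinAt) isClosed_Icc isClosed_Iic
  have hSbdd : BddAbove S := ⟨b, fun s hs => (mem_iUnion.1 hs).elim fun _ h => h.1.2⟩
  have hS₁ : s₁ ∈ S := mem_iUnion.2 ⟨i₁, hs₁, hi₁⟩
  obtain ⟨i, ht₀, hWi⟩ := mem_iUnion.1 (hS.csSup_mem ⟨s₁, hS₁⟩ hSbdd)
  set t₀ := sSup S
  have ht₀b : t₀ < b := ht₀.2.lt_of_ne fun h => (hb i).not_ge (h ▸ hWi)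
  have hright : ∀ k, ∀ s ∈ Ioo t₀ b, 0 < W k s := fun k s hs => by
    by_contra! hle
    exact hs.1.not_ge (le_csSup hSbdd (mem_iUnion.2 ⟨k, ⟨ht₀.1.trans hs.1.le, hs.2.le⟩, hle⟩))
  have hnonneg : ∀ k, 0 ≤ W k t₀ := fun k =>
    ge_of_tendsto ((hW k t₀ ht₀).continuousAt.tendsto.mono_left nhdsWithin_le_nhds)
      (eventually_of_mem (Ioo_mem_nhdsGT ht₀b) fun s hs => (hright k s hs).le)
  have hzero : W i t₀ = 0 := le_antisymm hWi (hnonneg i)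
  exact (hW' t₀ ⟨ht₀.1, ht₀b⟩ i hnonneg hzero).not_ge
    (deriv_nonneg_of_eq_zero_of_pos_right (hW i t₀ ht₀).hasDerivWithinAt hzero ht₀b (hright i))

section Comparison

variable {ι : Type*} [Fintype ι] {a b K : ℝ} {F : ℝ → (ι → ℝ) → ι → ℝ} {u v : ℝ → ι → ℝ}

theorem lt_add_mul_exp_of_quasimonotone (hmono : ∀ t, Quasimonotone (F t))
    (hshift : ∀ t z i, ∀ c ≥ 0, F t (z + fun _ => c) i ≤ F t z i + K * c)
    (hu : ∀ t ∈ Icc a b, HasDerivAt u (-F t (u t)) t)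
    (hv : ∀ t ∈ Icc a b, HasDerivAt v (-F t (v t)) t) (hb : u b ≤ v b)
    {ε : ℝ} (hε : 0 < ε) :
    ∀ t ∈ Icc a b, ∀ i, u t i < v t i + ε * Real.exp ((K + 1) * (b - t)) := by
  set e : ℝ → ℝ := fun t => ε * Real.exp ((K + 1) * (b - t))
  have he : ∀ t, HasDerivAt e (-((K + 1) * e t)) t := fun t => by
    refine ((((hasDerivAt_id t).const_sub b).const_mul (K + 1)).exp.const_mul ε).congr_deriv ?_
    simp only [e, id]
    ring
  have hW : ∀ k, ∀ t ∈ Icc a b, HasDerivAt (fun t => v t k - u t k + e t)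
      (F t (u t) k - F t (v t) k - (K + 1) * e t) t := fun k t ht => by
    refine (((hasDerivAt_pi.1 (hv t ht) k).sub (hasDerivAt_pi.1 (hu t ht) k)).add
      (he t)).congr_deriv ?_
    simp only [Pi.neg_apply]
    ring
  have hWb : ∀ k, 0 < v b k - u b k + e b := fun k => by
    simp only [e, sub_self, mul_zero, Real.exp_zero, mul_one]
    linarith [hb k]
  have htouch : ∀ t ∈ Ico a b, ∀ i, (∀ k, 0 ≤ v t k - u t k + e t) →
      v t i - u t i + e t = 0 → F t (u t) i - F t (v t) i - (K + 1) * e t < 0 := by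
    intro t _ i hnonneg hzero
    have hc : 0 < e t := mul_pos hε (Real.exp_pos _)
    have hquasi : F t (u t) i ≤ F t (v t + fun _ => e t) i :=
      hmono t i (u t) (v t + fun _ => e t)
        (fun k => by simp only [Pi.add_apply]; linarith [hnonneg k])
        (by simp only [Pi.add_apply]; linarith)
    linarith [hshift t (v t) i (e t) hc.le]
  intro t ht i
  linarith [pos_on_Icc_of_deriv_neg_at_boundary hW hWb htouch t ht i]

theorem le_of_quasimonotone (hmono : ∀ t, Quasimonotone (F t))
    (hshift : ∀ t z i, ∀ c ≥ 0, F t (z + fun _ => c) i ≤ F t z i + K * c)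
    (hu : ∀ t ∈ Icc a b, HasDerivAt u (-F t (u t)) t)
    (hv : ∀ t ∈ Icc a b, HasDerivAt v (-F t (v t)) t) (hb : u b ≤ v b) :
    ∀ t ∈ Icc a b, u t ≤ v t := by
  intro t ht i
  refine le_of_forall_pos_lt_add fun δ hδ => ?_
  have he : 0 < Real.exp ((K + 1) * (b - t)) := Real.exp_pos _
  simpa [div_mul_cancel₀ δ he.ne'] using
    lt_add_mul_exp_of_quasimonotone hmono hshift hu hv hb (div_pos hδ he) t ht i

end Comparison

theorem stmt_9_general {N : ℕ} (T : ℝ)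
    (A : Matrix (Fin N) (Fin N) ℝ)
    (hoff : ∀ i j, i ≠ j → 0 ≤ A i j) (hcol : ∀ j, ∑ i, A i j = 0)
    (f : ℝ → (Fin N → ℝ) → (Fin N → ℝ))
    (K : NNReal) (hfLip : ∀ t, LipschitzWith K (f t))
    -- quasimonotonicity
    (hfmono : ∀ t (i : Fin N) (z z' : Fin N → ℝ),
      z ≤ z' → z i = z' i → f t z i ≤ f t z' i)
    (φ ψ : Fin N → ℝ) (hφψ : φ ≤ ψ)
    (u v : ℝ → (Fin N → ℝ))
    (hu : ∀ t ∈ Set.Icc (0:ℝ) T, HasDerivAt u (-(f t (u t) + Aᵀ *ᵥ u t)) t)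
    (hv : ∀ t ∈ Set.Icc (0:ℝ) T, HasDerivAt v (-(f t (v t) + Aᵀ *ᵥ v t)) t)
    (huT : u T = φ) (hvT : v T = ψ) :
    ∀ t ∈ Set.Icc (0:ℝ) T, u t ≤ v t := by
  refine le_of_quasimonotone (F := fun t z => f t z + Aᵀ *ᵥ z) (K := K)
    (fun t => Quasimonotone.add (hfmono t) (quasimonotone_transpose_mulVec hoff)) ?_ hu hv
    (huT ▸ hvT ▸ hφψ)
  intro t z i c hc
  simp only [Pi.add_apply, transpose_mulVec_add_const hcol]
  linarith [(hfLip t).apply_add_const_le z hc i]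

theorem stmt_9 {N : ℕ} (T : ℝ) (hT : 0 < T)
    (A : Matrix (Fin N) (Fin N) ℝ)
    (hoff : ∀ i j, i ≠ j → 0 ≤ A i j) (hcol : ∀ j, ∑ i, A i j = 0)
    (f : ℝ → (Fin N → ℝ) → (Fin N → ℝ))
    (K : NNReal) (hfLip : ∀ t, LipschitzWith K (f t))
    -- the i-th component of f depends on z only through z_i and the
    -- differences z_k − z_i for those k with A_{ki} > 0
    (hfdep : ∀ t (i : Fin N) (z z' : Fin N → ℝ),
      z i = z' i → (∀ k, 0 < A k i → z k - z i = z' k - z' i) →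
      f t z i = f t z' i)
    -- quasimonotonicity
    (hfmono : ∀ t (i : Fin N) (z z' : Fin N → ℝ),
      z ≤ z' → z i = z' i → f t z i ≤ f t z' i)
    (φ ψ : Fin N → ℝ) (hφψ : φ ≤ ψ)
    (u v : ℝ → (Fin N → ℝ))
    (hu : ∀ t ∈ Set.Icc (0:ℝ) T, HasDerivAt u (-(f t (u t) + Aᵀ *ᵥ u t)) t)
    (hv : ∀ t ∈ Set.Icc (0:ℝ) T, HasDerivAt v (-(f t (v t) + Aᵀ *ᵥ v t)) t)
    (huT : u T = φ) (hvT : v T = ψ) :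
    ∀ t ∈ Set.Icc (0:ℝ) T, u t ≤ v t :=
  stmt_9_general T A hoff hcol f K hfLip hfmono φ ψ hφψ u v hu hv huT hvT
end

section
/- Let A be an N×N rate matrix and let α ≥ 1. Define for each i the driver component e_iᵀ f(z) := min_{r ∈ [1/α, α]} r (zᵀ A e_i). Then for all z, z' ∈ ℝ^N, |e_iᵀ f(z) − e_iᵀ f(z')| ≤ α |(z − z')ᵀ A e_i|, and |(z−z')ᵀ A e_i|² ≤ (∑_{k≠i} A_{ki}) · (z−z')ᵀ Ψ(A, e_i) (z−z'). -/
/-!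
The infimum of `r * s` over `r ∈ [α⁻¹, α]` is `min (α⁻¹ * s) (α * s)`, which is `α`-Lipschitz
in `s`. Since column `i` of `A` sums to zero, `wᵀ A eᵢ = ∑_{k ≠ i} A_{ki} (w_k − w_i)` and
`wᵀ Ψ(A, eᵢ) w = ∑_{k ≠ i} A_{ki} (w_k − w_i)²`, so the second bound is Cauchy–Schwarz with the
nonnegative weights `A_{ki}`.
-/

open Matrix Finset

theorem iInf_Icc_mul_eq_min {a b : ℝ} (hab : a ≤ b) (s : ℝ) :
    ⨅ r : Set.Icc a b, (r : ℝ) * s = min (a * s) (b * s) := by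
  have hmin : ∀ r ∈ Set.Icc a b, min (a * s) (b * s) ≤ r * s := fun r ⟨har, hrb⟩ => by
    rcases le_total 0 s with hs | hs
    · exact (min_le_left _ _).trans (mul_le_mul_of_nonneg_right har hs)
    · exact (min_le_right _ _).trans (mul_le_mul_of_nonpos_right hrb hs)
  have hbdd : BddBelow (Set.range fun r : Set.Icc a b => (r : ℝ) * s) :=
    ⟨_, Set.forall_mem_range.2 fun r => hmin r r.2⟩
  have : Nonempty (Set.Icc a b) := ⟨⟨a, le_rfl, hab⟩⟩
  refine le_antisymm (le_min ?_ ?_) (le_ciInf fun r => hmin r r.2)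
  · exact ciInf_le hbdd ⟨a, le_rfl, hab⟩
  · exact ciInf_le hbdd ⟨b, hab, le_rfl⟩

theorem abs_iInf_Icc_mul_sub_le {a b : ℝ} (ha : 0 ≤ a) (hab : a ≤ b) (s t : ℝ) :
    |(⨅ r : Set.Icc a b, (r : ℝ) * s) - ⨅ r : Set.Icc a b, (r : ℝ) * t| ≤ b * |s - t| := by
  rw [iInf_Icc_mul_eq_min hab, iInf_Icc_mul_eq_min hab]
  refine (abs_min_sub_min_le_max _ _ _ _).trans (max_le ?_ ?_)
  · rw [← mul_sub, abs_mul, abs_of_nonneg ha]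
    exact mul_le_mul_of_nonneg_right hab (abs_nonneg _)
  · rw [← mul_sub, abs_mul, abs_of_nonneg (ha.trans hab)]

section ColumnSum

variable {ι R : Type*} [Fintype ι] [DecidableEq ι] [CommRing R]

theorem dotProduct_mulVec_single_one (A : Matrix ι ι R) (w : ι → R) (i : ι) :
    w ⬝ᵥ (A *ᵥ Pi.single i 1) = ∑ k, A k i * w k := by
  simp only [mulVec_single_one, dotProduct, col_apply, mul_comm]

theorem sum_mul_eq_sum_erase_mul_sub {c : ι → R} (hc : ∑ k, c k = 0) (w : ι → R) (i : ι) :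
    ∑ k, c k * w k = ∑ k ∈ univ.erase i, c k * (w k - w i) := by
  rw [sum_erase _ (by rw [sub_self, mul_zero])]
  simp only [mul_sub, sum_sub_distrib, ← sum_mul, hc, zero_mul, sub_zero]

end ColumnSum

theorem dotProduct_Psi_single_mulVec {N : ℕ} (A : Matrix (Fin N) (Fin N) ℝ) (i : Fin N)
    (w : Fin N → ℝ) :
    w ⬝ᵥ (Psi A (Pi.single i 1) *ᵥ w) = ∑ k, A k i * w k ^ 2 - 2 * w i * ∑ k, A k i * w k := by
  have hdiag : diagonal (Pi.single i 1) *ᵥ w = w i • Pi.single i 1 := by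
    ext k
    rw [mulVec_diagonal]
    rcases eq_or_ne k i with rfl | hk <;> simp [*]
  have hcross : w ⬝ᵥ ((A * diagonal (Pi.single i 1)) *ᵥ w) = w i * ∑ k, A k i * w k := by
    rw [← mulVec_mulVec, hdiag, mulVec_smul, dotProduct_smul, dotProduct_mulVec_single_one,
      smul_eq_mul]
  have hsym : diagonal (Pi.single i 1) * Aᵀ = (A * diagonal (Pi.single i 1))ᵀ := by
    rw [transpose_mul, diagonal_transpose]
  have hdiagonal : w ⬝ᵥ (diagonal (A *ᵥ Pi.single i 1) *ᵥ w) = ∑ k, A k i * w k ^ 2 := by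
    simp only [dotProduct, mulVec_diagonal, mulVec_single_one, col_apply]
    exact sum_congr rfl fun k _ => by ring
  rw [Psi, hsym, sub_mulVec, sub_mulVec, dotProduct_sub, dotProduct_sub,
    dotProduct_transpose_mulVec, hdiagonal, hcross]
  ring

theorem dotProduct_Psi_single_mulVec_of_sum_eq_zero {N : ℕ} {A : Matrix (Fin N) (Fin N) ℝ}
    {i : Fin N} (hcol : ∑ k, A k i = 0) (w : Fin N → ℝ) :
    w ⬝ᵥ (Psi A (Pi.single i 1) *ᵥ w) = ∑ k ∈ univ.erase i, A k i * (w k - w i) ^ 2 := by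
  rw [dotProduct_Psi_single_mulVec, sum_erase _ (by rw [sub_self]; ring)]
  have : ∑ k, A k i * (w k - w i) ^ 2
      = ∑ k, A k i * w k ^ 2 - 2 * w i * ∑ k, A k i * w k + w i ^ 2 * ∑ k, A k i := by
    simp only [mul_sum, ← sum_sub_distrib, ← sum_add_distrib]
    exact sum_congr rfl fun k _ => by ring
  rw [this, hcol, mul_zero, add_zero]

theorem sq_sum_mul_le_sum_mul_sum_mul_sq {ι : Type*} (s : Finset ι) {c x : ι → ℝ}
    (hc : ∀ k ∈ s, 0 ≤ c k) :
    (∑ k ∈ s, c k * x k) ^ 2 ≤ (∑ k ∈ s, c k) * ∑ k ∈ s, c k * x k ^ 2 :=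
  sum_sq_le_sum_mul_sum_of_sq_le_mul s hc (fun k hk => mul_nonneg (hc k hk) (sq_nonneg _))
    fun k _ => (by ring : (c k * x k) ^ 2 = c k * (c k * x k ^ 2)).le

theorem stmt_16 {N : ℕ} (A : Matrix (Fin N) (Fin N) ℝ)
    (hoff : ∀ i j, i ≠ j → 0 ≤ A i j) (hcol : ∀ j, ∑ i, A i j = 0)
    (α : ℝ) (hα : 1 ≤ α) (i : Fin N)
    (f : (Fin N → ℝ) → ℝ)
    (hf : f = fun z => ⨅ r : Set.Icc (α⁻¹) α, (r : ℝ) * (z ⬝ᵥ (A *ᵥ Pi.single i 1)))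
    (z z' : Fin N → ℝ) :
    |f z - f z'| ≤ α * |(z - z') ⬝ᵥ (A *ᵥ Pi.single i 1)| ∧
    |(z - z') ⬝ᵥ (A *ᵥ Pi.single i 1)| ^ 2 ≤
      (∑ k ∈ Finset.univ.erase i, A k i) *
        ((z - z') ⬝ᵥ (Psi A (Pi.single i 1) *ᵥ (z - z'))) := by
  subst hf
  refine ⟨?_, ?_⟩
  · dsimp only
    rw [sub_dotProduct]
    exact abs_iInf_Icc_mul_sub_le (inv_nonneg.2 (zero_le_one.trans hα))
      ((inv_le_one_of_one_le₀ hα).trans hα) _ _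
  · rw [dotProduct_Psi_single_mulVec_of_sum_eq_zero (hcol i), dotProduct_mulVec_single_one,
      sum_mul_eq_sum_erase_mul_sub (hcol i) _ i, sq_abs]
    exact sq_sum_mul_le_sum_mul_sum_mul_sq _ fun k hk => hoff k i (ne_of_mem_erase hk)
end
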